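/- Let (X, M, μ) be a measure space, and suppose L^p(μ) ⊆ L^q(μ) for some 1 ≤ p < q ≤ ∞. Then inf{μ(E) : E ∈ M, μ(E) > 0} > 0. -/

import Mathlib

/-!
The inclusion `Lᵖ ⊆ L^q` is a linear map between Banach spaces whose graph is closed, because
convergence in `Lᵖ` or `L^q` forces a.e. convergence along a subsequence. By the closed graph
theorem it is bounded, `‖f‖_q ≤ C ‖f‖_p`. Testing this on indicator functions gives
`μ(E)^(1/q) ≤ C μ(E)^(1/p)`, i.e. `μ(E)^(1/p - 1/q) ≥ 1/C` for every set of finite positive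
measure, so these measures are bounded below by `C^(-1/(1/p - 1/q)) > 0`.
-/

open MeasureTheory ENNReal Filter

theorem Real.inv_rpow_inv_sub_le_of_rpow_le_mul_rpow {m C a b : ℝ} (hm : 0 < m) (hC : 0 < C)
    (hba : b < a) (h : m ^ b ≤ C * m ^ a) : C⁻¹ ^ (a - b)⁻¹ ≤ m := by
  have hab : 0 < a - b := sub_pos.2 hba
  have hC_inv : C⁻¹ ≤ m ^ (a - b) := by
    rw [Real.rpow_sub hm, inv_le_comm₀ hC (by positivity), inv_div,
      div_le_iff₀ (Real.rpow_pos_of_pos hm a)]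
    exact h
  calc C⁻¹ ^ (a - b)⁻¹ ≤ (m ^ (a - b)) ^ (a - b)⁻¹ := by gcongr
    _ = m := Real.rpow_rpow_inv hm.le hab.ne'

theorem ENNReal.one_div_toReal_lt_one_div_toReal {p q : ℝ≥0∞} (hp : p ≠ 0) (hpq : p < q) :
    1 / q.toReal < 1 / p.toReal := by
  simpa only [one_div, ENNReal.toReal_inv] using
    ENNReal.toReal_strict_mono (ENNReal.inv_ne_top.2 hp) (ENNReal.inv_lt_inv.2 hpq)

namespace MeasureTheory

variable {X : Type*} [MeasurableSpace X] {μ : Measure X} {p q : ℝ≥0∞}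

noncomputable def Lp.inclusionOfMemLp (hincl : ∀ f : X → ℝ, MemLp f p μ → MemLp f q μ) :
    Lp ℝ p μ →ₗ[ℝ] Lp ℝ q μ where
  toFun f := (hincl f (Lp.memLp f)).toLp f
  map_add' f g := by
    ext1
    filter_upwards [MemLp.coeFn_toLp (hincl _ (Lp.memLp (f + g))), Lp.coeFn_add f g,
      Lp.coeFn_add ((hincl f (Lp.memLp f)).toLp f) ((hincl g (Lp.memLp g)).toLp g),
      MemLp.coeFn_toLp (hincl f (Lp.memLp f)), MemLp.coeFn_toLp (hincl g (Lp.memLp g))]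
      with x h₁ h₂ h₃ h₄ h₅
    simp only [h₁, h₂, h₃, h₄, h₅, Pi.add_apply]
  map_smul' c f := by
    ext1
    filter_upwards [MemLp.coeFn_toLp (hincl _ (Lp.memLp (c • f))), Lp.coeFn_smul c f,
      Lp.coeFn_smul c ((hincl f (Lp.memLp f)).toLp f), MemLp.coeFn_toLp (hincl f (Lp.memLp f))]
      with x h₁ h₂ h₃ h₄
    simp only [h₁, h₂, h₃, h₄, Pi.smul_apply, RingHom.id_apply]

section

variable (hincl : ∀ f : X → ℝ, MemLp f p μ → MemLp f q μ)

theorem Lp.coeFn_inclusionOfMemLp (f : Lp ℝ p μ) : Lp.inclusionOfMemLp hincl f =ᵐ[μ] f :=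
  MemLp.coeFn_toLp (hincl f (Lp.memLp f))

theorem Lp.continuous_inclusionOfMemLp [Fact (1 ≤ p)] [Fact (1 ≤ q)] :
    Continuous (Lp.inclusionOfMemLp hincl) := by
  refine (Lp.inclusionOfMemLp hincl).continuous_of_seq_closed_graph fun u f g hu hTu => ?_
  have hf : TendstoInMeasure μ (fun n => (u n : X → ℝ)) atTop f :=
    tendstoInMeasure_of_tendsto_Lp hu
  have hg : TendstoInMeasure μ (fun n => (u n : X → ℝ)) atTop g :=
    (tendstoInMeasure_of_tendsto_Lp hTu).congr_left fun n =>
      Lp.coeFn_inclusionOfMemLp hincl (u n)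
  ext1
  exact (tendstoInMeasure_ae_unique hg hf).trans (Lp.coeFn_inclusionOfMemLp hincl f).symm

end

theorem exists_pos_norm_indicatorConstLp_le_of_memLp_imp [Fact (1 ≤ p)] [Fact (1 ≤ q)]
    (hincl : ∀ f : X → ℝ, MemLp f p μ → MemLp f q μ) :
    ∃ C, 0 < C ∧ ∀ (s : Set X) (hs : MeasurableSet s) (hμs : μ s ≠ ∞),
      ‖indicatorConstLp q hs hμs (1 : ℝ)‖ ≤ C * ‖indicatorConstLp p hs hμs (1 : ℝ)‖ := by
  let inclusion : Lp ℝ p μ →L[ℝ] Lp ℝ q μ :=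
    ⟨Lp.inclusionOfMemLp hincl, Lp.continuous_inclusionOfMemLp hincl⟩
  obtain ⟨C, hC, hbound⟩ := inclusion.bound
  refine ⟨C, hC, fun s hs hμs => ?_⟩
  have hindicator : Lp.inclusionOfMemLp hincl (indicatorConstLp p hs hμs (1 : ℝ)) =
      indicatorConstLp q hs hμs (1 : ℝ) := by
    ext1
    exact (Lp.coeFn_inclusionOfMemLp hincl _).trans <|
      indicatorConstLp_coeFn.trans indicatorConstLp_coeFn.symm
  rw [← hindicator]
  exact hbound _

end MeasureTheory

theorem stmt_1 {X : Type*} [MeasurableSpace X] (μ : Measure X)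
    (p q : ℝ≥0∞) (hp : 1 ≤ p) (hpq : p < q)
    (hincl : ∀ f : X → ℝ, MemLp f p μ → MemLp f q μ) :
    0 < sInf (μ '' {E : Set X | MeasurableSet E ∧ 0 < μ E}) := by
  have : Fact (1 ≤ p) := ⟨hp⟩
  have : Fact (1 ≤ q) := ⟨hp.trans hpq.le⟩
  have hp0 : p ≠ 0 := (zero_lt_one.trans_le hp).ne'
  have hq0 : q ≠ 0 := (hp0.bot_lt.trans hpq).ne'
  obtain ⟨C, hC, hbound⟩ := exists_pos_norm_indicatorConstLp_le_of_memLp_imp hincl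
  -- For `q = ∞`, `1 / q.toReal` is the junk value `0`, which matches `‖1_E‖_∞ = 1`.
  have hexp := ENNReal.one_div_toReal_lt_one_div_toReal hp0 hpq
  set c : ℝ := C⁻¹ ^ (1 / p.toReal - 1 / q.toReal)⁻¹
  have hlower : ∀ E, MeasurableSet E → 0 < μ E → ENNReal.ofReal c ≤ μ E := by
    intro E hE hμE
    rcases eq_or_ne (μ E) ∞ with hinf | hfin
    · simp [hinf]
    have h := hbound E hE hfin
    rw [norm_indicatorConstLp' hq0 hμE.ne', norm_indicatorConstLp' hp0 hμE.ne', norm_one,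
      one_mul, one_mul] at h
    rw [← ofReal_measureReal hfin]
    exact ENNReal.ofReal_le_ofReal <| Real.inv_rpow_inv_sub_le_of_rpow_le_mul_rpow
      (ENNReal.toReal_pos hμE.ne' hfin) hC hexp h
  refine (ENNReal.ofReal_pos.2 (show 0 < c by positivity)).trans_le (le_sInf ?_)
  rintro _ ⟨E, ⟨hE, hμE⟩, rfl⟩
  exact hlower E hE hμE
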